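/- arXiv:1703.02552 — 4 statements merged into one kernel-verified Lean document; each statement's English description precedes it below -/
import Mathlib

section
/- (Klein's inequality, spectral form) Let H be a complex Hilbert space with two Hilbert (orthonormal) bases (φ_m)_{m∈ℕ} and (ψ_n)_{n∈ℕ}, let a, b : ℕ → [0,1] be summable, and let f : [0,1] → ℝ be convex, continuously differentiable with derivative f', and satisfy f(0) = 0. Then Σ_n f(b_n) ≤ Σ_m f(a_m) + Σ_n Σ_m |⟨φ_m, ψ_n⟩|² · (b_n − a_m) · f'(b_n). (This is the key estimate giving Tr f(B) ≤ Tr f(A) + Tr[(B−A)f'(B)] ≤ Tr f(A) + ‖B−A‖₁·‖f'‖_∞ for the trace-class operators A = Σ_m a_m |φ_m⟩⟨φ_m| and B = Σ_n b_n |ψ_n⟩⟨ψ_n|.) -/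
/-!
The weights `c n m = |⟨φ m, ψ n⟩|²` form a doubly stochastic matrix: by Parseval in the basis `φ`
each row sums to `‖ψ n‖² = 1`, and by Parseval in `ψ` each column sums to `‖φ m‖² = 1`.
Multiplying the tangent-line inequality `f (b n) ≤ f (a m) + (b n - a m) f' (b n)` of the convex
`f` by `c n m` and summing over all pairs then gives the claim, since the row sums collapse the
left side to `∑ f (b n)` and the column sums collapse the first term on the right to `∑ f (a m)`.
All double series converge absolutely: `f'` is monotone, hence bounded by some `L` on `[0,1]`,
and `|f x| ≤ L x` because `f 0 = 0`, so every term is dominated by `L c n m (a m + b n)`.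
-/

open scoped InnerProductSpace

section Convex

variable {S : Set ℝ} {f f' : ℝ → ℝ} {x y d : ℝ}

theorem ConvexOn.add_mul_sub_le_of_hasDerivAt (hf : ConvexOn ℝ S f) (hx : x ∈ S) (hy : y ∈ S)
    (hd : HasDerivAt f d y) : f y + d * (x - y) ≤ f x := by
  rcases lt_trichotomy x y with hxy | rfl | hyx
  · have h := hf.slope_le_of_hasDerivAt hx hy hxy hd
    rw [slope_def_field, div_le_iff₀ (sub_pos.2 hxy)] at h
    linarith
  · simp
  · have h := hf.le_slope_of_hasDerivAt hy hx hyx hd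
    rw [slope_def_field, le_div_iff₀ (sub_pos.2 hyx)] at h
    linarith

theorem ConvexOn.monotoneOn_of_hasDerivAt (hf : ConvexOn ℝ S f)
    (hd : ∀ x ∈ S, HasDerivAt f (f' x) x) : MonotoneOn f' S := by
  intro x hx y hy hxy
  rcases hxy.eq_or_lt with rfl | hxy
  · rfl
  exact (hf.le_slope_of_hasDerivAt hx hy hxy (hd x hx)).trans
    (hf.slope_le_of_hasDerivAt hx hy hxy (hd y hy))

theorem ConvexOn.abs_le_max_abs_of_hasDerivAt {p q : ℝ} (hf : ConvexOn ℝ (Set.Icc p q) f)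
    (hd : ∀ x ∈ Set.Icc p q, HasDerivAt f (f' x) x) (hx : x ∈ Set.Icc p q) :
    |f' x| ≤ max |f' p| |f' q| :=
  have hmono := hf.monotoneOn_of_hasDerivAt hd
  abs_le_max_abs_abs (hmono (Set.left_mem_Icc.2 (hx.1.trans hx.2)) hx hx.1)
    (hmono hx (Set.right_mem_Icc.2 (hx.1.trans hx.2)) hx.2)

/-- The two tangent lines through `0` and through `x` squeeze `f x` between `x f'(0)` and
`x f'(x)`. -/
theorem ConvexOn.abs_le_mul_of_hasDerivAt {L : ℝ} (hf : ConvexOn ℝ S f)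
    (hd : ∀ x ∈ S, HasDerivAt f (f' x) x) (hL : ∀ x ∈ S, |f' x| ≤ L) (h0 : 0 ∈ S)
    (hf0 : f 0 = 0) (hx : x ∈ S) (hx0 : 0 ≤ x) : |f x| ≤ L * x := by
  have lower := hf.add_mul_sub_le_of_hasDerivAt hx h0 (hd 0 h0)
  have upper := hf.add_mul_sub_le_of_hasDerivAt h0 hx (hd x hx)
  have h0L := mul_le_mul_of_nonneg_right (abs_le.1 (hL 0 h0)).1 hx0
  have hxL := mul_le_mul_of_nonneg_right (abs_le.1 (hL x hx)).2 hx0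
  rw [abs_le]
  constructor <;> nlinarith

end Convex

theorem HasSum.tsum_mul_right_of_eq_one {α : Type*} {w : α → ℝ} (h : HasSum w 1) (x : ℝ) :
    ∑' i, w i * x = x := by
  rw [tsum_mul_right, h.tsum_eq, one_mul]

structure IsDoublyStochastic {ι κ : Type*} (c : ι → κ → ℝ) : Prop where
  nonneg : ∀ i j, 0 ≤ c i j
  hasSum_row : ∀ i, HasSum (c i) 1
  hasSum_col : ∀ j, HasSum (fun i => c i j) 1

section DoublyStochastic

variable {ι κ : Type*} {c : ι → κ → ℝ}

theorem summable_prod_mul_of_hasSum_one (hc : ∀ i j, 0 ≤ c i j) (hrow : ∀ i, HasSum (c i) 1)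
    {g : ι → ℝ} (hg0 : ∀ i, 0 ≤ g i) (hg : Summable g) :
    Summable fun p : ι × κ => c p.1 p.2 * g p.1 := by
  rw [summable_prod_of_nonneg fun p => mul_nonneg (hc p.1 p.2) (hg0 p.1)]
  exact ⟨fun i => (hrow i).summable.mul_right (g i),
    hg.congr fun i => ((hrow i).tsum_mul_right_of_eq_one (g i)).symm⟩

theorem tsum_prod_mul_of_hasSum_one (hrow : ∀ i, HasSum (c i) 1) {g : ι → ℝ}
    (h : Summable fun p : ι × κ => c p.1 p.2 * g p.1) :
    ∑' p : ι × κ, c p.1 p.2 * g p.1 = ∑' i, g i := by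
  rw [h.tsum_prod]
  exact tsum_congr fun i => (hrow i).tsum_mul_right_of_eq_one (g i)

theorem IsDoublyStochastic.summable_prod_mul_right (hc : IsDoublyStochastic c) {g : κ → ℝ}
    (hg0 : ∀ j, 0 ≤ g j) (hg : Summable g) : Summable fun p : ι × κ => c p.1 p.2 * g p.2 :=
  (summable_prod_mul_of_hasSum_one (fun j i => hc.nonneg i j) hc.hasSum_col hg0 hg).prod_symm

theorem IsDoublyStochastic.tsum_prod_mul_right (hc : IsDoublyStochastic c) {g : κ → ℝ}
    (h : Summable fun p : ι × κ => c p.1 p.2 * g p.2) :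
    ∑' p : ι × κ, c p.1 p.2 * g p.2 = ∑' j, g j := by
  rw [h.tsum_prod, ← Summable.tsum_comm (f := fun i j => c i j * g j) h]
  exact tsum_congr fun j => (hc.hasSum_col j).tsum_mul_right_of_eq_one (g j)

theorem IsDoublyStochastic.summable_of_abs_le (hc : IsDoublyStochastic c) {a : κ → ℝ}
    {b : ι → ℝ} (ha0 : ∀ j, 0 ≤ a j) (hb0 : ∀ i, 0 ≤ b i) (hasum : Summable a)
    (hbsum : Summable b) {v : ι × κ → ℝ} {L : ℝ}
    (hv : ∀ p, |v p| ≤ L * (c p.1 p.2 * b p.1 + c p.1 p.2 * a p.2)) : Summable v :=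
  (((summable_prod_mul_of_hasSum_one hc.nonneg hc.hasSum_row hb0 hbsum).add
    (hc.summable_prod_mul_right ha0 hasum)).mul_left L).of_norm_bounded hv

theorem IsDoublyStochastic.klein_inequality (hc : IsDoublyStochastic c) {a : κ → ℝ}
    {b : ι → ℝ} (ha : ∀ j, a j ∈ Set.Icc (0 : ℝ) 1) (hb : ∀ i, b i ∈ Set.Icc (0 : ℝ) 1)
    (hasum : Summable a) (hbsum : Summable b) {f f' : ℝ → ℝ}
    (hconv : ConvexOn ℝ (Set.Icc 0 1) f) (hf0 : f 0 = 0)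
    (hderiv : ∀ x ∈ Set.Icc (0 : ℝ) 1, HasDerivAt f (f' x) x) :
    ∑' i, f (b i) ≤ ∑' j, f (a j) + ∑' i, ∑' j, c i j * (b i - a j) * f' (b i) := by
  set L := max |f' 0| |f' 1|
  have hf'L : ∀ x ∈ Set.Icc (0 : ℝ) 1, |f' x| ≤ L := fun x hx =>
    hconv.abs_le_max_abs_of_hasDerivAt hderiv hx
  have hfL : ∀ x ∈ Set.Icc (0 : ℝ) 1, |f x| ≤ L * x := fun x hx =>
    hconv.abs_le_mul_of_hasDerivAt hderiv hf'L ⟨le_rfl, zero_le_one⟩ hf0 hx hx.1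
  have hL : 0 ≤ L := (abs_nonneg _).trans (le_max_left _ _)
  have summable {v : ι × κ → ℝ}
      (hv : ∀ p, |v p| ≤ L * (c p.1 p.2 * b p.1 + c p.1 p.2 * a p.2)) : Summable v :=
    hc.summable_of_abs_le (fun j => (ha j).1) (fun i => (hb i).1) hasum hbsum hv
  have hFb : Summable fun p : ι × κ => c p.1 p.2 * f (b p.1) := summable fun p => by
    rw [abs_mul, abs_of_nonneg (hc.nonneg _ _)]
    nlinarith [mul_le_mul_of_nonneg_left (hfL _ (hb p.1)) (hc.nonneg p.1 p.2),
      mul_nonneg (mul_nonneg hL (hc.nonneg p.1 p.2)) (ha p.2).1]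
  have hFa : Summable fun p : ι × κ => c p.1 p.2 * f (a p.2) := summable fun p => by
    rw [abs_mul, abs_of_nonneg (hc.nonneg _ _)]
    nlinarith [mul_le_mul_of_nonneg_left (hfL _ (ha p.2)) (hc.nonneg p.1 p.2),
      mul_nonneg (mul_nonneg hL (hc.nonneg p.1 p.2)) (hb p.1).1]
  have hD : Summable fun p : ι × κ => c p.1 p.2 * (b p.1 - a p.2) * f' (b p.1) :=
    summable fun p => by
      have hba : |b p.1 - a p.2| ≤ b p.1 + a p.2 := by
        rw [abs_le]; constructor <;> linarith [(hb p.1).1, (ha p.2).1]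
      have := mul_le_mul hba (hf'L _ (hb p.1)) (abs_nonneg _)
        (by linarith [(hb p.1).1, (ha p.2).1])
      rw [abs_mul, abs_mul, abs_of_nonneg (hc.nonneg _ _)]
      nlinarith [hc.nonneg p.1 p.2]
  calc ∑' i, f (b i) = ∑' p : ι × κ, c p.1 p.2 * f (b p.1) :=
        (tsum_prod_mul_of_hasSum_one hc.hasSum_row hFb).symm
    _ ≤ ∑' p : ι × κ, (c p.1 p.2 * f (a p.2) + c p.1 p.2 * (b p.1 - a p.2) * f' (b p.1)) :=
        hFb.tsum_le_tsum (fun p => by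
          nlinarith [hc.nonneg p.1 p.2, hconv.add_mul_sub_le_of_hasDerivAt (ha p.2) (hb p.1)
            (hderiv _ (hb p.1))]) (hFa.add hD)
    _ = ∑' p : ι × κ, c p.1 p.2 * f (a p.2) +
          ∑' p : ι × κ, c p.1 p.2 * (b p.1 - a p.2) * f' (b p.1) := hFa.tsum_add hD
    _ = ∑' j, f (a j) + ∑' i, ∑' j, c i j * (b i - a j) * f' (b i) := by
        rw [hc.tsum_prod_mul_right (g := fun j => f (a j)) hFa, hD.tsum_prod]

end DoublyStochastic

theorem HilbertBasis.hasSum_norm_inner_sq {ι 𝕜 E : Type*} [RCLike 𝕜] [NormedAddCommGroup E]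
    [InnerProductSpace 𝕜 E] (b : HilbertBasis ι 𝕜 E) (x : E) :
    HasSum (fun i => ‖⟪b i, x⟫_𝕜‖ ^ 2) (‖x‖ ^ 2) := by
  rw [← RCLike.hasSum_ofReal 𝕜]
  convert b.hasSum_inner_mul_inner x x using 1
  · ext i
    rw [← inner_conj_symm x (b i), RCLike.conj_mul]
    norm_cast
  · rw [inner_self_eq_norm_sq_to_K]
    norm_cast

theorem HilbertBasis.isDoublyStochastic_norm_inner_sq {ι κ 𝕜 E : Type*} [RCLike 𝕜]
    [NormedAddCommGroup E] [InnerProductSpace 𝕜 E] (φ : HilbertBasis ι 𝕜 E)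
    (ψ : HilbertBasis κ 𝕜 E) : IsDoublyStochastic fun j i => ‖⟪φ i, ψ j⟫_𝕜‖ ^ 2 where
  nonneg _ _ := by positivity
  hasSum_row j := by simpa [ψ.orthonormal.1 j] using φ.hasSum_norm_inner_sq (ψ j)
  hasSum_col i := by
    simpa [norm_inner_symm, φ.orthonormal.1 i] using ψ.hasSum_norm_inner_sq (φ i)

/-- Klein's inequality, spectral form: for trace-class operators
`A = ∑ m, a m |φ m⟩⟨φ m|` and `B = ∑ n, b n |ψ n⟩⟨ψ n|` with `0 ≤ A, B ≤ 1`, and a convex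
continuously differentiable `f : [0,1] → ℝ` with `f 0 = 0`,
`Tr f(B) ≤ Tr f(A) + Tr[(B−A) f'(B)]`. -/
theorem klein_inequality {H : Type*} [NormedAddCommGroup H] [InnerProductSpace ℂ H]
    (φ ψ : HilbertBasis ℕ ℂ H)
    (a b : ℕ → ℝ) (ha01 : ∀ m, a m ∈ Set.Icc (0 : ℝ) 1) (hb01 : ∀ n, b n ∈ Set.Icc (0 : ℝ) 1)
    (hasum : Summable a) (hbsum : Summable b)
    (f f' : ℝ → ℝ) (hconv : ConvexOn ℝ (Set.Icc 0 1) f) (hf0 : f 0 = 0)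
    (hderiv : ∀ x ∈ Set.Icc (0 : ℝ) 1, HasDerivAt f (f' x) x) :
    ∑' n, f (b n) ≤ ∑' m, f (a m) +
      ∑' n, ∑' m, ‖⟪(φ m : H), (ψ n : H)⟫_ℂ‖ ^ 2 * (b n - a m) * f' (b n) :=
  (φ.isDoublyStochastic_norm_inner_sq ψ).klein_inequality ha01 hb01 hasum hbsum hconv hf0 hderiv
end

section
/- For all real numbers r, q with 1 ≤ r < q and all real x with 0 ≤ x ≤ 1 − (r/q)^{1/(q−1)}, one has (1−x)^q ≤ 1 − r·x. -/
/-! The map `y ↦ y ^ q` is convex for `q ≥ 1`, so it lies below its tangent line at `y = 1 - x`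
evaluated at `1`: `(1 - x) ^ q ≤ 1 - q (1 - x) ^ (q - 1) x`. The bound on `x` is exactly
`(1 - x) ^ (q - 1) ≥ r / q`, i.e. the slope `q (1 - x) ^ (q - 1)` is at least `r`. -/

open Real

/-- Bernoulli's inequality for the exponent `q` and base `1 / y`, multiplied through by `y ^ q`. -/
theorem rpow_add_mul_rpow_sub_one_mul_one_sub_le_one {y q : ℝ} (hy : 0 < y) (hq : 1 ≤ q) :
    y ^ q + q * y ^ (q - 1) * (1 - y) ≤ 1 := by
  have bernoulli : 1 + q * (y⁻¹ - 1) ≤ (y ^ q)⁻¹ := by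
    rw [← inv_rpow hy.le]
    simpa using one_add_mul_self_le_rpow_one_add (s := y⁻¹ - 1) (by linarith [inv_pos.2 hy]) hq
  have hyq : 0 < y ^ q := rpow_pos_of_pos hy q
  calc y ^ q + q * y ^ (q - 1) * (1 - y) = y ^ q * (1 + q * (y⁻¹ - 1)) := by
        rw [rpow_sub_one hy.ne']; field_simp
    _ ≤ y ^ q * (y ^ q)⁻¹ := mul_le_mul_of_nonneg_left bernoulli hyq.le
    _ = 1 := mul_inv_cancel₀ hyq.ne'

theorem one_sub_rpow_le_of_le_mul_rpow {r q x : ℝ} (hq : 1 ≤ q) (hx0 : 0 ≤ x) (hx1 : x < 1)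
    (hslope : r ≤ q * (1 - x) ^ (q - 1)) :
    (1 - x) ^ q ≤ 1 - r * x := by
  have tangent := rpow_add_mul_rpow_sub_one_mul_one_sub_le_one (sub_pos.2 hx1) hq
  rw [sub_sub_cancel] at tangent
  linarith [mul_le_mul_of_nonneg_right hslope hx0]

/-- For `1 ≤ r < q` and `0 ≤ x ≤ 1 − (r/q)^{1/(q−1)}`, one has `(1−x)^q ≤ 1 − r·x`. -/
theorem one_sub_rpow_le (r q x : ℝ) (hr : 1 ≤ r) (hrq : r < q)
    (hx0 : 0 ≤ x) (hx : x ≤ 1 - (r / q) ^ (1 / (q - 1))) :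
    (1 - x) ^ q ≤ 1 - r * x := by
  have hq : 1 < q := hr.trans_lt hrq
  have hrq_pos : 0 < r / q := div_pos (by linarith) (by linarith)
  set t := (r / q) ^ (1 / (q - 1))
  have ht_pos : 0 < t := rpow_pos_of_pos hrq_pos _
  have ht_pow : t ^ (q - 1) = r / q := by
    rw [← rpow_mul hrq_pos.le, one_div_mul_cancel (by linarith), rpow_one]
  have hslope : r ≤ q * (1 - x) ^ (q - 1) := by
    have : t ^ (q - 1) ≤ (1 - x) ^ (q - 1) := rpow_le_rpow ht_pos.le (by linarith) (by linarith)
    rwa [ht_pow, div_le_iff₀' (by linarith)] at this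
  exact one_sub_rpow_le_of_le_mul_rpow hq.le hx0 (by linarith) hslope
end

section
/- The function x ↦ log(g⁻¹(x) + 1) + 1 is convex and increasing on [0,∞). Concretely: (i) g is strictly increasing on [0,∞); and (ii) for all y₁, y₂ > 0, all t ∈ [0,1], and all y > 0 with g(y) = t·g(y₁) + (1−t)·g(y₂), one has log(y+1) ≤ t·log(y₁+1) + (1−t)·log(y₂+1). -/
/-!
In the variable `s = log (E + 1)` the function `g` becomes `ψ s = g (exp s - 1)`, and the claim
is that `ψ⁻¹` is convex, i.e. that the increasing function `ψ` is concave on `[0, ∞)`. Indeed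
`ψ' s = exp s * (s - log (exp s - 1))`, and `ψ'' ≤ 0` reduces to `log u ≤ u - 1` at
`u = exp s / (exp s - 1)`.
-/

/-- `g(E) = (E+1)·log(E+1) − E·log E` (note `Real.log 0 = 0`, so `g 0 = 0`). -/
noncomputable def g (E : ℝ) : ℝ := (E + 1) * Real.log (E + 1) - E * Real.log E

open Real Set

noncomputable def gExpSubOne (s : ℝ) : ℝ := g (exp s - 1)

lemma continuous_g : Continuous g :=
  (continuous_mul_log.comp (continuous_add_const 1)).sub continuous_mul_log

lemma hasDerivAt_g {x : ℝ} (hx : 0 < x) : HasDerivAt g (log (x + 1) - log x) x := by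
  have hshift : HasDerivAt (fun y : ℝ => (y + 1) * log (y + 1)) (log (x + 1) + 1) x := by
    simpa [Function.comp_def] using
      (hasDerivAt_mul_log (by positivity : x + 1 ≠ 0)).comp x ((hasDerivAt_id x).add_const 1)
  exact (hshift.sub (hasDerivAt_mul_log hx.ne')).congr_deriv (by ring)

lemma strictMonoOn_g : StrictMonoOn g (Ici 0) := by
  refine strictMonoOn_of_deriv_pos (convex_Ici 0) continuous_g.continuousOn fun x hx => ?_
  rw [interior_Ici] at hx
  rw [(hasDerivAt_g hx).deriv, sub_pos]
  exact log_lt_log hx (lt_add_one x)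

lemma gExpSubOne_log_add_one {z : ℝ} (hz : 0 < z + 1) : gExpSubOne (log (z + 1)) = g z := by
  rw [gExpSubOne, exp_log hz, add_sub_cancel_right]

lemma strictMonoOn_gExpSubOne : StrictMonoOn gExpSubOne (Ici 0) := by
  have hexp : StrictMonoOn (fun s : ℝ => exp s - 1) (Ici 0) :=
    fun a _ b _ hab => sub_lt_sub_right (exp_lt_exp.mpr hab) 1
  refine strictMonoOn_g.comp hexp fun s hs => ?_
  simpa using one_le_exp (mem_Ici.mp hs)

lemma exp_sub_one_pos {s : ℝ} (hs : 0 < s) : 0 < exp s - 1 :=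
  sub_pos.mpr (one_lt_exp_iff.mpr hs)

lemma hasDerivAt_gExpSubOne {s : ℝ} (hs : 0 < s) :
    HasDerivAt gExpSubOne (exp s * (s - log (exp s - 1))) s := by
  have h := (hasDerivAt_g (exp_sub_one_pos hs)).comp s ((hasDerivAt_exp s).sub_const 1)
  rw [sub_add_cancel, log_exp] at h
  exact h.congr_deriv (mul_comm _ _)

lemma hasDerivAt_exp_mul_sub_log_exp_sub_one {s : ℝ} (hs : 0 < s) :
    HasDerivAt (fun s => exp s * (s - log (exp s - 1)))
      (exp s * (s - log (exp s - 1) + 1 - exp s / (exp s - 1))) s := by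
  have hlog := (hasDerivAt_log (exp_sub_one_pos hs).ne').comp s ((hasDerivAt_exp s).sub_const 1)
  refine ((hasDerivAt_exp s).mul ((hasDerivAt_id s).sub hlog)).congr_deriv ?_
  simp only [Pi.sub_apply, Function.comp_apply, id_eq]
  field_simp
  ring

lemma sub_log_exp_sub_one_le {s : ℝ} (hs : 0 < s) :
    s - log (exp s - 1) ≤ exp s / (exp s - 1) - 1 := by
  have h := log_le_sub_one_of_pos (div_pos (exp_pos s) (exp_sub_one_pos hs))
  rwa [log_div (exp_pos s).ne' (exp_sub_one_pos hs).ne', log_exp] at h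

lemma concaveOn_gExpSubOne : ConcaveOn ℝ (Ici 0) gExpSubOne := by
  refine concaveOn_of_hasDerivWithinAt2_nonpos (convex_Ici 0)
    (f' := fun s => exp s * (s - log (exp s - 1)))
    (f'' := fun s => exp s * (s - log (exp s - 1) + 1 - exp s / (exp s - 1)))
    (continuous_g.comp (continuous_exp.sub continuous_const)).continuousOn
    (fun x hx => ?_) (fun x hx => ?_) (fun x hx => ?_) <;> rw [interior_Ici] at hx
  · exact (hasDerivAt_gExpSubOne hx).hasDerivWithinAt
  · exact (hasDerivAt_exp_mul_sub_log_exp_sub_one hx).hasDerivWithinAt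
  · have := sub_log_exp_sub_one_le hx
    exact mul_nonpos_of_nonneg_of_nonpos (exp_pos x).le (by linarith)

/-- The inverse of a strictly increasing concave function is convex, in the form needed when the
inverse is not at hand. -/
lemma ConcaveOn.le_combo_of_apply_eq_combo {D : Set ℝ} {f : ℝ → ℝ} (hf : ConcaveOn ℝ D f)
    (hmono : StrictMonoOn f D) {x a b μ ν : ℝ} (hx : x ∈ D) (ha : a ∈ D) (hb : b ∈ D)
    (hμ : 0 ≤ μ) (hν : 0 ≤ ν) (hμν : μ + ν = 1) (hfx : f x = μ * f a + ν * f b) :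
    x ≤ μ * a + ν * b := by
  have hconc := hf.2 ha hb hμ hν hμν
  simp only [smul_eq_mul, ← hfx] at hconc
  exact (hmono.le_iff_le hx (hf.1 ha hb hμ hν hμν)).mp hconc

/-- The function `x ↦ log(g⁻¹(x) + 1) + 1` is increasing and convex on `[0,∞)`:
(i) `g` is strictly increasing on `[0,∞)`; (ii) if `g y = t·g y₁ + (1−t)·g y₂`, then
`log(y+1) ≤ t·log(y₁+1) + (1−t)·log(y₂+1)`. -/
theorem log_ginv_convex_increasing :
    StrictMonoOn g (Set.Ici (0 : ℝ)) ∧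
    ∀ y₁ y₂ : ℝ, 0 < y₁ → 0 < y₂ → ∀ t ∈ Set.Icc (0 : ℝ) 1, ∀ y : ℝ, 0 < y →
      g y = t * g y₁ + (1 - t) * g y₂ →
      Real.log (y + 1) ≤ t * Real.log (y₁ + 1) + (1 - t) * Real.log (y₂ + 1) := by
  refine ⟨strictMonoOn_g, fun y₁ y₂ hy₁ hy₂ t ⟨ht₀, ht₁⟩ y hy hgy => ?_⟩
  have hlog_mem {z : ℝ} (hz : 0 < z) : log (z + 1) ∈ Ici 0 :=
    log_nonneg (by linarith)
  refine concaveOn_gExpSubOne.le_combo_of_apply_eq_combo strictMonoOn_gExpSubOne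
    (hlog_mem hy) (hlog_mem hy₁) (hlog_mem hy₂) ht₀ (sub_nonneg.mpr ht₁) (by ring) ?_
  rw [gExpSubOne_log_add_one (by linarith), gExpSubOne_log_add_one (by linarith),
    gExpSubOne_log_add_one (by linarith), hgy]
end

section
/- For all real numbers p, q with p > q ≥ 1, the function z ↦ (1−z^p)^{1/p}/(1−z)^{1/q} tends to +∞ as z → 1 from the left. In particular the supremum over z ∈ [0,1) of (1−z^p)^{1/p}/(1−z)^{1/q} is infinite when p > q ≥ 1, so the p→q norm of the Husimi quantum-classical channel is infinite in this regime. -/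
open Filter

lemma rpow_neg_tendsto_atTop {c : ℝ} (hc : c < 0) :
    Tendsto (fun x : ℝ => x ^ c) (nhdsWithin 0 (Set.Ioi 0)) atTop := by
  have h1 : Tendsto (fun x : ℝ => x ^ (-c)) (nhdsWithin 0 (Set.Ioi 0))
      (nhdsWithin 0 (Set.Ioi 0)) := by
    apply tendsto_nhdsWithin_of_tendsto_nhds_of_eventually_within
    · have := (Real.continuousAt_rpow_const 0 (-c) (Or.inr (by linarith))).tendsto
      simpa [Real.zero_rpow (by linarith : -c ≠ 0)] using this.mono_left nhdsWithin_le_nhds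
    · filter_upwards [self_mem_nhdsWithin] with x hx
      exact Real.rpow_pos_of_pos hx _
  have h2 : Tendsto (fun x : ℝ => (x ^ (-c))⁻¹) (nhdsWithin 0 (Set.Ioi 0)) atTop :=
    tendsto_inv_nhdsGT_zero.comp h1
  refine h2.congr' ?_
  filter_upwards [self_mem_nhdsWithin] with x hx
  rw [← Real.rpow_neg (le_of_lt hx), neg_neg]

/-- For `p > q ≥ 1`, the ratio `(1−z^p)^{1/p}/(1−z)^{1/q}` tends to `+∞` as `z → 1⁻` within
`[0,1)`; in particular its supremum over `z ∈ [0,1)` is infinite, so the `p → q` norm of the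
Husimi quantum-classical channel is infinite when `p > q ≥ 1`. -/
theorem one_sub_zpow_ratio_unbounded (p q : ℝ) (hq : 1 ≤ q) (hpq : q < p) :
    Tendsto (fun z : ℝ => (1 - z ^ p) ^ (1 / p) / (1 - z) ^ (1 / q))
      (nhdsWithin 1 (Set.Ico 0 1)) atTop ∧
    ¬ BddAbove ((fun z : ℝ => (1 - z ^ p) ^ (1 / p) / (1 - z) ^ (1 / q)) '' Set.Ico 0 1) := by
  have hq0 : 0 < q := lt_of_lt_of_le one_pos hq
  have hp0 : 0 < p := lt_trans hq0 hpq
  have hc : 1 / p - 1 / q < 0 := by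
    have : 1 / p < 1 / q := one_div_lt_one_div_of_lt hq0 hpq
    linarith
  -- main tendsto
  have hsub : Tendsto (fun z : ℝ => 1 - z) (nhdsWithin 1 (Set.Ico 0 1))
      (nhdsWithin 0 (Set.Ioi 0)) := by
    apply tendsto_nhdsWithin_of_tendsto_nhds_of_eventually_within
    · have : Tendsto (fun z : ℝ => 1 - z) (nhds 1) (nhds (1 - 1)) :=
        (tendsto_const_nhds.sub tendsto_id)
      simpa using this.mono_left nhdsWithin_le_nhds
    · filter_upwards [self_mem_nhdsWithin] with z hz
      simpa using hz.2
  have hlow : Tendsto (fun z : ℝ => (1 - z) ^ (1 / p - 1 / q))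
      (nhdsWithin 1 (Set.Ico 0 1)) atTop :=
    (rpow_neg_tendsto_atTop hc).comp hsub
  have hbound : ∀ᶠ z in nhdsWithin (1:ℝ) (Set.Ico 0 1),
      (1 - z) ^ (1 / p - 1 / q) ≤ (1 - z ^ p) ^ (1 / p) / (1 - z) ^ (1 / q) := by
    filter_upwards [self_mem_nhdsWithin] with z hz
    obtain ⟨hz0, hz1⟩ := hz
    have h1z : 0 < 1 - z := by linarith
    have hzp : z ^ p ≤ z := by
      rcases eq_or_lt_of_le hz0 with h | h
      · simp [← h, Real.zero_rpow (ne_of_gt hp0)]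
      · calc z ^ p ≤ z ^ (1:ℝ) :=
              Real.rpow_le_rpow_of_exponent_ge h (le_of_lt hz1) (by linarith)
          _ = z := Real.rpow_one z
    have hkey : (1 - z) ^ (1 / p) ≤ (1 - z ^ p) ^ (1 / p) :=
      Real.rpow_le_rpow (le_of_lt h1z) (by linarith) (by positivity)
    rw [Real.rpow_sub h1z, div_le_div_iff_of_pos_right (Real.rpow_pos_of_pos h1z _)]
    exact hkey
  have hmain := tendsto_atTop_mono' _ hbound hlow
  refine ⟨hmain, ?_⟩
  rintro ⟨M, hM⟩
  have hne : (nhdsWithin (1:ℝ) (Set.Ico 0 1)).NeBot := by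
    apply mem_closure_iff_nhdsWithin_neBot.mp
    have : (1:ℝ) ∈ closure (Set.Ico (0:ℝ) 1) := by
      rw [closure_Ico (by norm_num : (0:ℝ) ≠ 1)]
      exact ⟨by norm_num, le_refl 1⟩
    exact this
  have : ∀ᶠ z in nhdsWithin (1:ℝ) (Set.Ico 0 1),
      M + 1 ≤ (1 - z ^ p) ^ (1 / p) / (1 - z) ^ (1 / q) :=
    hmain.eventually_ge_atTop (M + 1)
  obtain ⟨z, hzge, hzmem⟩ := (this.and self_mem_nhdsWithin).exists
  have := hM (Set.mem_image_of_mem _ hzmem)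
  linarith
end
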